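/- Fix constants c > 0 and b < 0. If u : ℝ → ℝ is twice continuously differentiable, satisfies c·u(x) = (1 − b·u(x)²)·u''(x) for all x ∈ ℝ, and u(x) → 0 and u'(x) → 0 as |x| → ∞, then u is identically zero. In other words, the stationary equation c·u = (1 − b·u²)·u'' admits no nontrivial classical solitary wave solution when b < 0. -/

import Mathlib

open Filter Set Topology

/-!
Since `1 - b u² > 0`, the equation gives `u u'' = c u² / (1 - b u²) ≥ 0`, so
`(u²)'' = 2 u'² + 2 u u'' ≥ 0` and `u²` is convex. A convex function tending to `0` at infinity
is nonpositive, because `f x ≤ (f (x + t v) + f (x - t v)) / 2` for every `t`; hence `u² = 0`.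
-/

theorem tendsto_add_smul_atTop_cocompact {E : Type*} [NormedAddCommGroup E] [NormedSpace ℝ E]
    (x : E) {v : E} (hv : v ≠ 0) : Tendsto (fun t : ℝ => x + t • v) atTop (cocompact E) := by
  refine tendsto_cocompact_of_tendsto_dist_comp_atTop x ?_
  simp only [dist_self_add_left, norm_smul, Real.norm_eq_abs]
  exact (tendsto_abs_atTop_atTop.comp tendsto_id).atTop_mul_const (norm_pos_iff.2 hv)

theorem ConvexOn.le_of_tendsto_cocompact {E : Type*} [NormedAddCommGroup E] [NormedSpace ℝ E]
    [Nontrivial E] {f : E → ℝ} {a : ℝ} (hf : ConvexOn ℝ univ f)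
    (hlim : Tendsto f (cocompact E) (𝓝 a)) (x : E) : f x ≤ a := by
  obtain ⟨v, hv⟩ := exists_ne (0 : E)
  have hmid : ∀ t : ℝ, f x ≤ (1 / 2 : ℝ) • f (x + t • v) + (1 / 2 : ℝ) • f (x + t • -v) := by
    intro t
    have h := hf.2 (mem_univ (x + t • v)) (mem_univ (x + t • -v))
      (by norm_num : (0 : ℝ) ≤ 1 / 2) (by norm_num : (0 : ℝ) ≤ 1 / 2) (by norm_num)
    have hx : (1 / 2 : ℝ) • (x + t • v) + (1 / 2 : ℝ) • (x + t • -v) = x := by module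
    rwa [hx] at h
  have hsum : Tendsto (fun t : ℝ => (1 / 2 : ℝ) • f (x + t • v) + (1 / 2 : ℝ) • f (x + t • -v))
      atTop (𝓝 ((1 / 2 : ℝ) • a + (1 / 2 : ℝ) • a)) :=
    ((hlim.comp (tendsto_add_smul_atTop_cocompact x hv)).const_smul _).add
      ((hlim.comp (tendsto_add_smul_atTop_cocompact x (neg_ne_zero.2 hv))).const_smul _)
  have ha : (1 / 2 : ℝ) • a + (1 / 2 : ℝ) • a = a := by module
  exact ha ▸ ge_of_tendsto' hsum hmid

theorem convexOn_univ_sq_of_mul_deriv2_nonneg {u : ℝ → ℝ} (hu : Differentiable ℝ u)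
    (hu' : Differentiable ℝ (deriv u)) (h : ∀ x, 0 ≤ u x * deriv (deriv u) x) :
    ConvexOn ℝ univ (fun x => u x ^ 2) := by
  have hd : deriv (fun x => u x ^ 2) = fun x => 2 * (u x * deriv u x) := by
    funext x
    rw [((hu x).hasDerivAt.fun_pow 2).deriv]
    ring
  have hd2 : ∀ x, HasDerivAt (fun x => 2 * (u x * deriv u x))
      (2 * (deriv u x * deriv u x + u x * deriv (deriv u) x)) x := fun x =>
    (((hu x).hasDerivAt.mul (hu' x).hasDerivAt)).const_mul 2
  refine convexOn_univ_of_deriv2_nonneg (fun x => ((hu x).hasDerivAt.fun_pow 2).differentiableAt)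
    (hd ▸ fun x => (hd2 x).differentiableAt) fun x => ?_
  rw [Function.iterate_succ_apply, Function.iterate_one, hd, (hd2 x).deriv]
  nlinarith [mul_self_nonneg (deriv u x), h x]

theorem no_solitary_wave_for_negative_b
    (c b : ℝ) (hc : 0 < c) (hb : b < 0) (u : ℝ → ℝ)
    (hu : ContDiff ℝ 2 u)
    (heq : ∀ x : ℝ, c * u x = (1 - b * u x ^ 2) * deriv (deriv u) x)
    (hdecay : Tendsto u (cocompact ℝ) (nhds 0)) :
    ∀ x : ℝ, u x = 0 := by
  have hmul_nonneg : ∀ x, 0 ≤ u x * deriv (deriv u) x := by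
    intro x
    have hpos : 0 < 1 - b * u x ^ 2 := by nlinarith [sq_nonneg (u x)]
    have h : (1 - b * u x ^ 2) * (u x * deriv (deriv u) x) = c * u x ^ 2 := by
      rw [mul_left_comm, ← heq x]
      ring
    exact nonneg_of_mul_nonneg_right (h ▸ by positivity) hpos
  have hconvex := convexOn_univ_sq_of_mul_deriv2_nonneg (hu.differentiable (by norm_num))
    hu.differentiable_deriv_two hmul_nonneg
  have hsq : Tendsto (fun x => u x ^ 2) (cocompact ℝ) (𝓝 0) := by
    simpa using hdecay.pow 2
  intro x
  exact pow_eq_zero_iff two_ne_zero |>.1 <|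
    le_antisymm (hconvex.le_of_tendsto_cocompact hsq x) (sq_nonneg (u x))
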